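/- Fix real parameters α, β, γ with α ≠ 0. Let H(x,y,z) = x²/2 − αz, let J(x,y,z) be the skew-symmetric matrix with J₁₂ = z, J₁₃ = −y, J₂₃ = 0, and let R(x,y,z) = (1/α) times the symmetric matrix with entries R₁₁ = α², R₁₂ = 0, R₁₃ = 0, R₂₂ = 0, R₂₃ = γy, R₃₃ = −βz. Then for every (x,y,z) ∈ ℝ³, (J − R)∇H = (αy − αx, γy − xz, xy − βz), i.e. the Lü system is a resistive-Hamiltonian system. Moreover ∇H·((J−R)∇H) = −α(x² − βz) and the divergence of this vector field is identically −α − β + γ. -/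

import Mathlib

set_option linter.unusedVariables false

open Matrix

/-- Partial derivative with respect to the first variable. -/
noncomputable def pd1 (f : ℝ → ℝ → ℝ → ℝ) (x y z : ℝ) : ℝ := deriv (fun t => f t y z) x
/-- Partial derivative with respect to the second variable. -/
noncomputable def pd2 (f : ℝ → ℝ → ℝ → ℝ) (x y z : ℝ) : ℝ := deriv (fun t => f x t z) y
/-- Partial derivative with respect to the third variable. -/
noncomputable def pd3 (f : ℝ → ℝ → ℝ → ℝ) (x y z : ℝ) : ℝ := deriv (fun t => f x y t) z

/-- Hamiltonian of the Lü system. -/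
noncomputable def H (α : ℝ) (x y z : ℝ) : ℝ := x ^ 2 / 2 - α * z

/-- Gradient of `H`. -/
noncomputable def gradH (α : ℝ) (x y z : ℝ) : Fin 3 → ℝ :=
  ![pd1 (H α) x y z, pd2 (H α) x y z, pd3 (H α) x y z]

/-- Poisson matrix of the Lü system. -/
noncomputable def Jmat (x y z : ℝ) : Matrix (Fin 3) (Fin 3) ℝ :=
  !![0, z, -y; -z, 0, 0; y, 0, 0]

/-- Resistance matrix of the Lü system. -/
noncomputable def Rmat (α β γ : ℝ) (x y z : ℝ) : Matrix (Fin 3) (Fin 3) ℝ :=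
  (1 / α) • !![α ^ 2, 0, 0; 0, 0, γ * y; 0, γ * y, -β * z]

/-- The resistive-Hamiltonian vector field `(J − R)∇H`. -/
noncomputable def F (α β γ : ℝ) (x y z : ℝ) : Fin 3 → ℝ :=
  (Jmat x y z - Rmat α β γ x y z).mulVec (gradH α x y z)

lemma dmul (c t : ℝ) : deriv (HMul.hMul c) t = c := by
  have : HMul.hMul c = fun s : ℝ => c * s := rfl
  rw [this]
  have h := deriv_const_mul_field (v := fun s : ℝ => s) (x := t) c
  simpa using h

lemma gradH_eq (α x y z : ℝ) : gradH α x y z = ![x, 0, -α] := by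
  have h1 : pd1 (H α) x y z = x := by
    simp only [pd1, H]
    rw [deriv_fun_sub (by fun_prop) (by fun_prop)]
    simp [deriv_div_const]
  have h2 : pd2 (H α) x y z = 0 := by
    simp [pd2, H]
  have h3 : pd3 (H α) x y z = -α := by
    simp only [pd3, H]
    rw [deriv_fun_sub (by fun_prop) (by fun_prop)]
    simp [dmul]
  simp [gradH, h1, h2, h3]

lemma F_eq (α β γ : ℝ) (hα : α ≠ 0) (x y z : ℝ) :
    F α β γ x y z = ![α * y - α * x, γ * y - x * z, x * y - β * z] := by
  funext i
  fin_cases i <;>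
    · simp [F, Jmat, Rmat, gradH_eq, mulVec, dotProduct, Fin.sum_univ_succ]
      field_simp
      ring

theorem stmt_11' (α β γ : ℝ) (hα : α ≠ 0) :
    (∀ x y z : ℝ, F α β γ x y z =
      ![α * y - α * x, γ * y - x * z, x * y - β * z]) ∧
    (∀ x y z : ℝ, gradH α x y z ⬝ᵥ F α β γ x y z = -α * (x ^ 2 - β * z)) ∧
    (∀ x y z : ℝ,
      pd1 (fun x y z => F α β γ x y z 0) x y z
        + pd2 (fun x y z => F α β γ x y z 1) x y z
        + pd3 (fun x y z => F α β γ x y z 2) x y z = -α - β + γ) := by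
  refine ⟨fun x y z => F_eq α β γ hα x y z, fun x y z => ?_, fun x y z => ?_⟩
  · rw [F_eq α β γ hα, gradH_eq]
    simp [dotProduct, Fin.sum_univ_succ]
    ring
  · have e0 : (fun x y z => F α β γ x y z 0) = fun x y z => α * y - α * x := by
      funext a b c; rw [F_eq α β γ hα]; simp
    have e1 : (fun x y z => F α β γ x y z 1) = fun x y z => γ * y - x * z := by
      funext a b c; rw [F_eq α β γ hα]; simp
    have e2 : (fun x y z => F α β γ x y z 2) = fun x y z => x * y - β * z := by
      funext a b c; rw [F_eq α β γ hα]; simp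
    rw [e0, e1, e2]
    simp only [pd1, pd2, pd3]
    rw [deriv_fun_sub (by fun_prop) (by fun_prop), deriv_fun_sub (by fun_prop) (by fun_prop),
        deriv_fun_sub (by fun_prop) (by fun_prop)]
    simp [dmul]
    ring

/-- The Lü system (with `α ≠ 0`) is a resistive-Hamiltonian system: `(J − R)∇H` gives
its equations of motion; moreover `∇H·((J−R)∇H) = −α(x² − βz)` and the divergence of
the vector field is identically `−α − β + γ`. -/
theorem stmt_11 (α β γ : ℝ) (hα : α ≠ 0) :
    (∀ x y z : ℝ, F α β γ x y z =
      ![α * y - α * x, γ * y - x * z, x * y - β * z]) ∧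
    (∀ x y z : ℝ, gradH α x y z ⬝ᵥ F α β γ x y z = -α * (x ^ 2 - β * z)) ∧
    (∀ x y z : ℝ,
      pd1 (fun x y z => F α β γ x y z 0) x y z
        + pd2 (fun x y z => F α β γ x y z 1) x y z
        + pd3 (fun x y z => F α β γ x y z 2) x y z = -α - β + γ) :=
  stmt_11' α β γ hα
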